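/- arXiv:2604.19721 — 3 statements merged into one kernel-verified Lean document; each statement's English description precedes it below -/
import Mathlib

section
/- Fix n ≥ 1 and let G_n be the divisibility graph on {1, 2, ..., n}. A number m ∈ {1, ..., n} is a winning opening move for the first player in Juniper Green on {1, ..., n} (i.e., Win({m}, m) fails in the snake-in-the-box game on G_n) if and only if m lies in D(G_n), i.e., some maximum matching of G_n does not cover m. -/
/-- `M` is a matching of `G`: a set of edges of `G`, no two of which share a vertex. -/
def IsMatching {V : Type*} (G : SimpleGraph V) (M : Finset (Sym2 V)) : Prop :=
  (∀ e ∈ M, e ∈ G.edgeSet) ∧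
  ∀ e ∈ M, ∀ f ∈ M, e ≠ f → ∀ v : V, v ∈ e → v ∉ f

/-- The vertex `v` is covered by the matching `M`, i.e. it is an endpoint of an edge of `M`. -/
def Covers {V : Type*} (M : Finset (Sym2 V)) (v : V) : Prop := ∃ e ∈ M, v ∈ e

/-- `M` is a maximum matching of `G`: a matching of maximum cardinality among all matchings. -/
def IsMaximumMatching {V : Type*} (G : SimpleGraph V) (M : Finset (Sym2 V)) : Prop :=
  IsMatching G M ∧ ∀ M' : Finset (Sym2 V), IsMatching G M' → M'.card ≤ M.card

/-- The snake-in-the-box winning predicate: `Win G S v` means the player about to move from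
the position with visited set `S` and current vertex `v ∈ S` has a winning strategy.
`Win G S v` holds iff there is `w` adjacent to `v`, not yet visited, with `¬ Win G (insert w S) w`. -/
def Win {V : Type*} [Fintype V] [DecidableEq V] (G : SimpleGraph V) (S : Finset V) (v : V) :
    Prop :=
  ∃ w : V, ∃ _ : G.Adj v w, ∃ _ : w ∉ S, ¬ Win G (insert w S) w
termination_by Sᶜ.card
decreasing_by
  simp only [Finset.compl_insert]
  exact Finset.card_erase_lt_of_mem (Finset.mem_compl.mpr (by assumption))

/-- The divisibility graph on `{1, …, n}`: distinct `i, j` are adjacent iff `i ∣ j` or `j ∣ i`. -/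
def divGraph (n : ℕ) : SimpleGraph {m : ℕ // m ∈ Finset.Icc 1 n} :=
  SimpleGraph.fromRel (fun i j => (i : ℕ) ∣ (j : ℕ) ∨ (j : ℕ) ∣ (i : ℕ))

/-!
A position `(S, v)` of the snake game on a finite graph `G` is won by the mover iff `v` is
essential in `G - (S \ {v})`, i.e. deleting `v` as well lowers the matching number. If it does,
some maximum matching of `G - (S \ {v})` covers `v` by an edge `vw`, and moving to `w` leaves the
opponent in a position where deleting `w` does not lower the matching number. If it does not,
then after any move `v → w` a maximum matching of `G - S` must cover `w`, since otherwise adding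
the edge `vw` would beat the matching number of `G - (S \ {v})`.
-/

open Finset

variable {V : Type*} {G : SimpleGraph V}

theorem covers_insert_iff {M : Finset (Sym2 V)} {e : Sym2 V} {a : V} [DecidableEq (Sym2 V)] :
    Covers (insert e M) a ↔ a ∈ e ∨ Covers M a := by
  simp [Covers]

theorem Covers.mono {M N : Finset (Sym2 V)} {a : V} (h : Covers N a) (hNM : N ⊆ M) :
    Covers M a :=
  let ⟨e, he, hae⟩ := h
  ⟨e, hNM he, hae⟩

theorem IsMatching.subset {M N : Finset (Sym2 V)} (hM : IsMatching G M) (hNM : N ⊆ M) :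
    IsMatching G N :=
  ⟨fun e he => hM.1 e (hNM he), fun e he f hf => hM.2 e (hNM he) f (hNM hf)⟩

theorem IsMatching.not_covers_erase [DecidableEq V] {M : Finset (Sym2 V)} {e : Sym2 V} {a : V}
    (hM : IsMatching G M) (he : e ∈ M) (hae : a ∈ e) : ¬ Covers (M.erase e) a := by
  rintro ⟨f, hf, haf⟩
  exact hM.2 e he f (mem_of_mem_erase hf) (ne_of_mem_erase hf).symm a hae haf

theorem IsMatching.insert_edge [DecidableEq V] {M : Finset (Sym2 V)} {v w : V}
    (hM : IsMatching G M) (hvw : G.Adj v w) (hv : ¬ Covers M v) (hw : ¬ Covers M w) :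
    IsMatching G (insert s(v, w) M) := by
  have hfree : ∀ f ∈ M, ∀ x ∈ s(v, w), x ∉ f := by
    rintro f hf x hx hxf
    rcases Sym2.mem_iff.mp hx with rfl | rfl
    exacts [hv ⟨f, hf, hxf⟩, hw ⟨f, hf, hxf⟩]
  refine ⟨?_, ?_⟩
  · simp only [mem_insert, forall_eq_or_imp]
    exact ⟨hvw, hM.1⟩
  · intro e he f hf hef x hxe hxf
    rcases mem_insert.mp he with rfl | he <;> rcases mem_insert.mp hf with rfl | hf
    · exact hef rfl
    · exact hfree f hf x hxe hxf
    · exact hfree e he x hxf hxe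
    · exact hM.2 e he f hf hef x hxe hxf

/-- A matching of `G - A`. -/
def IsMatchingOff (G : SimpleGraph V) (A : Finset V) (M : Finset (Sym2 V)) : Prop :=
  IsMatching G M ∧ ∀ a ∈ A, ¬ Covers M a

theorem isMatchingOff_empty {M : Finset (Sym2 V)} : IsMatchingOff G ∅ M ↔ IsMatching G M := by
  simp [IsMatchingOff]

theorem isMatchingOff_insert [DecidableEq V] {A : Finset V} {M : Finset (Sym2 V)} {a : V} :
    IsMatchingOff G (insert a A) M ↔ IsMatchingOff G A M ∧ ¬ Covers M a := by
  simp only [IsMatchingOff, mem_insert, forall_eq_or_imp]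
  tauto

theorem isMatchingOff_singleton {M : Finset (Sym2 V)} {a : V} :
    IsMatchingOff G {a} M ↔ IsMatching G M ∧ ¬ Covers M a := by
  simp [IsMatchingOff]

section MatchingNumber

variable [Fintype V]

open Classical in
/-- The matching number of `G - A`. -/
noncomputable def matchingNumberOff (G : SimpleGraph V) (A : Finset V) : ℕ :=
  (univ.filter (IsMatchingOff G A)).sup card

theorem card_le_matchingNumberOff {A : Finset V} {M : Finset (Sym2 V)}
    (hM : IsMatchingOff G A M) : M.card ≤ matchingNumberOff G A := by
  classical
  exact le_sup (f := card) (mem_filter.mpr ⟨mem_univ M, hM⟩)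

theorem exists_isMatchingOff_card_eq (G : SimpleGraph V) (A : Finset V) :
    ∃ M, IsMatchingOff G A M ∧ M.card = matchingNumberOff G A := by
  classical
  have hempty : IsMatchingOff G A ∅ :=
    ⟨⟨by simp, by simp⟩, fun a _ ⟨e, he, _⟩ => notMem_empty e he⟩
  obtain ⟨M, hM, hcard⟩ :=
    exists_mem_eq_sup _ ⟨∅, mem_filter.mpr ⟨mem_univ _, hempty⟩⟩ (card (α := Sym2 V))
  exact ⟨M, (mem_filter.mp hM).2, hcard.symm⟩

variable [DecidableEq V]

theorem exists_adj_of_matchingNumberOff_lt_erase {S : Finset V} {v : V} (hv : v ∈ S)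
    (hlt : matchingNumberOff G S < matchingNumberOff G (S.erase v)) :
    ∃ w, G.Adj v w ∧ w ∉ S ∧
      matchingNumberOff G S ≤ matchingNumberOff G (insert w S) := by
  have hS : insert v (S.erase v) = S := insert_erase hv
  obtain ⟨M, hM, hcard⟩ := exists_isMatchingOff_card_eq G (S.erase v)
  have hcov : Covers M v := by
    by_contra hcov
    have : IsMatchingOff G S M := hS ▸ isMatchingOff_insert.mpr ⟨hM, hcov⟩
    exact (card_le_matchingNumberOff this).not_gt (hcard ▸ hlt)
  obtain ⟨e, he, hve⟩ := hcov
  obtain ⟨w, rfl⟩ := Sym2.mem_iff_exists.mp hve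
  have hvw : G.Adj v w := hM.1.1 _ he
  have hwS : w ∉ S := fun hwS =>
    hM.2 w (mem_erase.mpr ⟨hvw.ne', hwS⟩) ⟨_, he, Sym2.mem_mk_right v w⟩
  have hoff : IsMatchingOff G (insert w S) (M.erase s(v, w)) := by
    rw [← hS, isMatchingOff_insert, isMatchingOff_insert]
    refine ⟨⟨⟨hM.1.subset (erase_subset _ _), fun a ha hcov => ?_⟩, ?_⟩, ?_⟩
    · exact hM.2 a ha (hcov.mono (erase_subset _ _))
    · exact hM.1.not_covers_erase he (Sym2.mem_mk_left v w)
    · exact hM.1.not_covers_erase he (Sym2.mem_mk_right v w)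
  refine ⟨w, hvw, hwS, ?_⟩
  have := card_le_matchingNumberOff hoff
  rw [card_erase_of_mem he] at this
  omega

theorem matchingNumberOff_lt_erase_of_adj {S : Finset V} {v w : V} (hv : v ∈ S)
    (hvw : G.Adj v w) (hwS : w ∉ S)
    (hle : matchingNumberOff G S ≤ matchingNumberOff G (insert w S)) :
    matchingNumberOff G S < matchingNumberOff G (S.erase v) := by
  obtain ⟨N, hN, hcard⟩ := exists_isMatchingOff_card_eq G (insert w S)
  obtain ⟨hNS, hNw⟩ := isMatchingOff_insert.mp hN
  have hoff : IsMatchingOff G (S.erase v) (insert s(v, w) N) := by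
    refine ⟨hN.1.insert_edge hvw (hNS.2 v hv) hNw, fun a ha => ?_⟩
    have hav : a ≠ v := ne_of_mem_erase ha
    have haw : a ≠ w := fun h => hwS (h ▸ mem_of_mem_erase ha)
    rw [covers_insert_iff, Sym2.mem_iff]
    exact fun h => h.elim (·.elim hav haw) (hNS.2 a (mem_of_mem_erase ha))
  have := card_le_matchingNumberOff hoff
  rw [card_insert_of_notMem fun h => hNw ⟨_, h, Sym2.mem_mk_right v w⟩] at this
  omega

theorem matchingNumberOff_lt_erase_iff {S : Finset V} {v : V} (hv : v ∈ S) :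
    matchingNumberOff G S < matchingNumberOff G (S.erase v) ↔
      ∃ w, G.Adj v w ∧ w ∉ S ∧ matchingNumberOff G S ≤ matchingNumberOff G (insert w S) :=
  ⟨exists_adj_of_matchingNumberOff_lt_erase hv,
    fun ⟨_, hvw, hwS, hle⟩ => matchingNumberOff_lt_erase_of_adj hv hvw hwS hle⟩

theorem win_iff_matchingNumberOff_lt_erase (S : Finset V) (v : V) (hv : v ∈ S) :
    Win G S v ↔ matchingNumberOff G S < matchingNumberOff G (S.erase v) := by
  rw [Win, matchingNumberOff_lt_erase_iff hv]
  simp only [exists_prop]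
  refine exists_congr fun w => and_congr_right fun _ => and_congr_right fun hwS => ?_
  rw [win_iff_matchingNumberOff_lt_erase (insert w S) w (mem_insert_self w S),
    erase_insert hwS, not_lt]
termination_by Sᶜ.card
decreasing_by
  simp only [compl_insert]
  exact card_erase_lt_of_mem (mem_compl.mpr hwS)

theorem not_win_singleton_iff (v : V) :
    ¬ Win G {v} v ↔ ∃ M, IsMaximumMatching G M ∧ ¬ Covers M v := by
  rw [win_iff_matchingNumberOff_lt_erase {v} v (mem_singleton_self v), erase_singleton,
    not_lt]
  constructor
  · intro hle
    obtain ⟨M, hM, hcard⟩ := exists_isMatchingOff_card_eq G {v}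
    obtain ⟨hMatch, hv⟩ := isMatchingOff_singleton.mp hM
    refine ⟨M, ⟨hMatch, fun N hN => ?_⟩, hv⟩
    calc N.card ≤ matchingNumberOff G ∅ :=
          card_le_matchingNumberOff (isMatchingOff_empty.mpr hN)
      _ ≤ M.card := hcard ▸ hle
  · rintro ⟨M, ⟨hMatch, hmax⟩, hv⟩
    obtain ⟨N, hN, hcard⟩ := exists_isMatchingOff_card_eq G ∅
    calc matchingNumberOff G ∅ = N.card := hcard.symm
      _ ≤ M.card := hmax N (isMatchingOff_empty.mp hN)
      _ ≤ matchingNumberOff G {v} :=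
          card_le_matchingNumberOff (isMatchingOff_singleton.mpr ⟨hMatch, hv⟩)

end MatchingNumber

theorem juniperGreen_winning_opening_iff_mem_D_general (n : ℕ)
    (m : {k : ℕ // k ∈ Finset.Icc 1 n}) :
    ¬ Win (divGraph n) {m} m ↔
      ∃ M : Finset (Sym2 {k : ℕ // k ∈ Finset.Icc 1 n}),
        IsMaximumMatching (divGraph n) M ∧ ¬ Covers M m :=
  not_win_singleton_iff m

/-- **Main result.** For `n ≥ 1`, a number `m ∈ {1, …, n}` is a winning opening move in
Juniper Green on `{1, …, n}` iff `m ∈ D(Gₙ)`: some maximum matching of the divisibility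
graph `Gₙ` does not cover `m`. -/
theorem juniperGreen_winning_opening_iff_mem_D (n : ℕ) (hn : 1 ≤ n)
    (m : {k : ℕ // k ∈ Finset.Icc 1 n}) :
    ¬ Win (divGraph n) {m} m ↔
      ∃ M : Finset (Sym2 {k : ℕ // k ∈ Finset.Icc 1 n}),
        IsMaximumMatching (divGraph n) M ∧ ¬ Covers M m :=
  juniperGreen_winning_opening_iff_mem_D_general n m
end

section
/- Let n ≥ 2 and suppose p and q are distinct primes with n/2 < p ≤ n and n/2 < q ≤ n. Then p is a winning opening move for the first player in Juniper Green on {1, ..., n}; that is, Win({p}, p) fails in the snake-in-the-box game on the divisibility graph G_n. -/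
/-!
The only neighbour of a prime `r > n/2` in the divisibility graph on `{1, …, n}` is `1`: its
only proper divisor is `1` and its smallest proper multiple `2r` exceeds `n`. So after the
opening move `p` the second player is forced to `1`, and the first player answers `q`, from
which the only move, back to `1`, is no longer available.
-/

section Game

variable {V : Type*} [Fintype V] [DecidableEq V] (G : SimpleGraph V)

theorem win_iff {S : Finset V} {v : V} :
    Win G S v ↔ ∃ w, G.Adj v w ∧ w ∉ S ∧ ¬ Win G (insert w S) w := by
  rw [Win]
  simp only [exists_prop]

theorem not_win_of_forall_adj_mem {S : Finset V} {v : V} (h : ∀ w, G.Adj v w → w ∈ S) :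
    ¬ Win G S v := by
  rw [win_iff]
  rintro ⟨w, hvw, hwS, -⟩
  exact hwS (h w hvw)

theorem not_win_of_forall_adj_eq {S : Finset V} {u v : V} (hv : ∀ w, G.Adj v w → w = u)
    (hu : Win G (insert u S) u) : ¬ Win G S v := by
  rw [win_iff]
  rintro ⟨w, hvw, -, hw⟩
  obtain rfl := hv w hvw
  exact hw hu

theorem not_win_of_pendants {S : Finset V} {u v x : V} (hv : ∀ w, G.Adj v w → w = u)
    (hx : ∀ w, G.Adj x w → w = u) (hux : G.Adj u x) (hxS : x ∉ S) : ¬ Win G S v := by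
  refine not_win_of_forall_adj_eq G hv ((win_iff G).mpr ⟨x, hux, ?_, ?_⟩)
  · simpa [(G.ne_of_adj hux).symm] using hxS
  · refine not_win_of_forall_adj_mem G fun w hxw => ?_
    rw [hx w hxw]
    exact Finset.mem_insert_of_mem (Finset.mem_insert_self u S)

end Game

section DivGraph

variable {n : ℕ}

theorem divGraph_adj {i j : {m : ℕ // m ∈ Finset.Icc 1 n}} :
    (divGraph n).Adj i j ↔ i ≠ j ∧ ((i : ℕ) ∣ j ∨ (j : ℕ) ∣ i) := by
  rw [divGraph, SimpleGraph.fromRel_adj]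
  tauto

theorem divGraph_one_adj {m : ℕ} (hm : m ∈ Finset.Icc 1 n) (h1 : 1 ∈ Finset.Icc 1 n)
    (hm1 : m ≠ 1) : (divGraph n).Adj ⟨1, h1⟩ ⟨m, hm⟩ :=
  divGraph_adj.mpr ⟨fun h => hm1 (congrArg Subtype.val h).symm, Or.inl (one_dvd m)⟩

theorem dvd_of_divGraph_adj_of_lt_two_mul {v w : {m : ℕ // m ∈ Finset.Icc 1 n}}
    (hv : n < 2 * v) (h : (divGraph n).Adj v w) : (w : ℕ) ∣ v := by
  obtain ⟨hne, hvw | hwv⟩ := divGraph_adj.mp h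
  · have hw := Finset.mem_Icc.mp w.2
    have : (w : ℕ) = v := Nat.eq_of_dvd_of_lt_two_mul (by omega) hvw (by omega)
    exact absurd (Subtype.ext this).symm hne
  · exact hwv

theorem divGraph_adj_prime_eq_one {r : ℕ} (hr : r.Prime) (hrn : n < 2 * r)
    (hmem : r ∈ Finset.Icc 1 n) {w : {m : ℕ // m ∈ Finset.Icc 1 n}}
    (h : (divGraph n).Adj ⟨r, hmem⟩ w) : (w : ℕ) = 1 := by
  have hwr : (w : ℕ) ≠ r := fun e => (divGraph n).ne_of_adj h (Subtype.ext e.symm)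
  exact (hr.eq_one_or_self_of_dvd _ (dvd_of_divGraph_adj_of_lt_two_mul hrn h)).resolve_right hwr

end DivGraph

theorem large_prime_is_winning_opening_general (n p q : ℕ)
    (hp : p.Prime) (hq : q.Prime) (hpq : p ≠ q)
    (hp1 : n < 2 * p) (hp2 : p ≤ n) (hq1 : n < 2 * q) (hq2 : q ≤ n) :
    ¬ Win (divGraph n)
        {(⟨p, Finset.mem_Icc.mpr ⟨hp.one_lt.le, hp2⟩⟩ : {k : ℕ // k ∈ Finset.Icc 1 n})}
        ⟨p, Finset.mem_Icc.mpr ⟨hp.one_lt.le, hp2⟩⟩ := by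
  have h1 : 1 ∈ Finset.Icc 1 n := Finset.mem_Icc.mpr ⟨le_rfl, hp.one_lt.le.trans hp2⟩
  have hqn : q ∈ Finset.Icc 1 n := Finset.mem_Icc.mpr ⟨hq.one_lt.le, hq2⟩
  refine not_win_of_pendants (divGraph n) (u := ⟨1, h1⟩) (x := ⟨q, hqn⟩)
    (fun w hw => Subtype.ext (divGraph_adj_prime_eq_one hp hp1 _ hw))
    (fun w hw => Subtype.ext (divGraph_adj_prime_eq_one hq hq1 hqn hw))
    (divGraph_one_adj hqn h1 hq.one_lt.ne') ?_
  simpa [Subtype.ext_iff] using hpq.symm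

/-- If `p, q` are distinct primes with `n/2 < p ≤ n` and `n/2 < q ≤ n`, then `p` is a
winning opening move for the first player in Juniper Green on `{1, …, n}`. -/
theorem large_prime_is_winning_opening (n p q : ℕ) (hn : 2 ≤ n)
    (hp : p.Prime) (hq : q.Prime) (hpq : p ≠ q)
    (hp1 : n < 2 * p) (hp2 : p ≤ n) (hq1 : n < 2 * q) (hq2 : q ≤ n) :
    ¬ Win (divGraph n)
        {(⟨p, Finset.mem_Icc.mpr ⟨hp.one_lt.le, hp2⟩⟩ : {k : ℕ // k ∈ Finset.Icc 1 n})}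
        ⟨p, Finset.mem_Icc.mpr ⟨hp.one_lt.le, hp2⟩⟩ :=
  large_prime_is_winning_opening_general n p q hp hq hpq hp1 hp2 hq1 hq2
end

section
/- There exists N such that for all n ≥ N, the vertex 1 belongs to A(G_n) in the Gallai–Edmonds decomposition of the divisibility graph G_n: every maximum matching of G_n covers the vertex 1, and there exists a vertex m ∈ {1, ..., n} adjacent to 1 (i.e., m ≠ 1) that is not covered by some maximum matching of G_n. -/
/-!
An odd vertex `s > n / 2` of `Gₙ` has no multiple in `{1, …, n}` besides itself, so in any
matching its partner is a proper divisor: odd and at most `n / 3`. Distinct vertices have distinct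
partners, and there are about `n / 4` odd numbers in `(n / 2, n]` but only about `n / 6` odd
numbers up to `n / 3`, so every matching misses some odd `s > n / 2`. This `s` is a neighbour
of `1`: a maximum matching missing `1` could be enlarged by the edge `{1, s}`, and a maximum
matching missing `s` exhibits an inessential neighbour of `1`.
-/

open Finset

section Matching

variable {V : Type*} {G : SimpleGraph V} {M : Finset (Sym2 V)}

lemma IsMatching.eq_of_mem_of_mem (hM : IsMatching G M) {e f : Sym2 V} (he : e ∈ M)
    (hf : f ∈ M) {v : V} (hve : v ∈ e) (hvf : v ∈ f) : e = f := by
  by_contra hne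
  exact hM.2 e he f hf hne v hve hvf

lemma IsMatching.insert [DecidableEq V] (hM : IsMatching G M) {u v : V} (huv : G.Adj u v)
    (hu : ¬Covers M u) (hv : ¬Covers M v) : IsMatching G (insert s(u, v) M) := by
  have fresh : ∀ e ∈ M, ∀ w ∈ s(u, v), w ∉ e := by
    rintro e he w hw hwe
    rcases Sym2.mem_iff.mp hw with rfl | rfl
    exacts [hu ⟨e, he, hwe⟩, hv ⟨e, he, hwe⟩]
  refine ⟨fun e he => ?_, fun e he f hf hef w hwe => ?_⟩
  · rcases mem_insert.mp he with rfl | he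
    exacts [huv, hM.1 e he]
  · rcases mem_insert.mp he with rfl | he <;> rcases mem_insert.mp hf with rfl | hf
    · exact absurd rfl hef
    · exact fresh f hf w hwe
    · exact fun hwf => fresh e he w hwf hwe
    · exact hM.2 e he f hf hef w hwe

lemma IsMatching.card_le_card_of_forall_covers (hM : IsMatching G M) {S T : Finset V}
    (hS : ∀ s ∈ S, Covers M s) (hST : ∀ s ∈ S, ∀ t, G.Adj s t → t ∈ T) : #S ≤ #T := by
  refine card_le_card_of_forall_subsingleton (fun s t => s(s, t) ∈ M) (fun s hs => ?_) ?_
  · obtain ⟨e, he, hse⟩ := hS s hs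
    have hpair := Sym2.other_spec hse
    refine ⟨Sym2.Mem.other hse, hST s hs _ ?_, by rwa [hpair]⟩
    rw [← SimpleGraph.mem_edgeSet, hpair]
    exact hM.1 e he
  · rintro t - a ⟨-, ha⟩ b ⟨-, hb⟩
    exact Sym2.congr_left.mp
      (hM.eq_of_mem_of_mem ha hb (Sym2.mem_mk_right a t) (Sym2.mem_mk_right b t))

lemma IsMaximumMatching.covers_or_covers [DecidableEq V] (hM : IsMaximumMatching G M)
    {u v : V} (huv : G.Adj u v) : Covers M u ∨ Covers M v := by
  by_contra! h
  have hnew : s(u, v) ∉ M := fun huvM => h.1 ⟨_, huvM, Sym2.mem_mk_left u v⟩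
  have := hM.2 _ (hM.1.insert huv h.1 h.2)
  rw [card_insert_of_notMem hnew] at this
  omega

lemma exists_isMaximumMatching [Fintype V] (G : SimpleGraph V) :
    ∃ M, IsMaximumMatching G M := by
  classical
  obtain ⟨M, hM, hmax⟩ := exists_max_image {M : Finset (Sym2 V) | IsMatching G M} card
    ⟨∅, mem_filter.mpr ⟨mem_univ _, by simp [IsMatching]⟩⟩
  exact ⟨M, (mem_filter.mp hM).2, fun M' hM' => hmax M' (mem_filter.mpr ⟨mem_univ _, hM'⟩)⟩

end Matching

section DivGraph

variable {n : ℕ}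

lemma divGraph_adj_s12 {v w : {k : ℕ // k ∈ Icc 1 n}} :
    (divGraph n).Adj v w ↔ v ≠ w ∧ ((v : ℕ) ∣ w ∨ (w : ℕ) ∣ v) := by
  simp only [divGraph, SimpleGraph.fromRel_adj]
  tauto

lemma divGraph_adj_one {h1 : 1 ∈ Icc 1 n} {v : {k : ℕ // k ∈ Icc 1 n}} :
    (divGraph n).Adj ⟨1, h1⟩ v ↔ (v : ℕ) ≠ 1 := by
  rw [divGraph_adj_s12, Ne, Subtype.ext_iff, eq_comm]
  simp

lemma divGraph_adj_of_odd {s t : {k : ℕ // k ∈ Icc 1 n}} (hs : Odd (s : ℕ)) (hsn : n < 2 * s)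
    (hst : (divGraph n).Adj s t) : Odd (t : ℕ) ∧ 3 * t ≤ n := by
  obtain ⟨hne, hdvd⟩ := divGraph_adj_s12.mp hst
  have hne_val : (s : ℕ) ≠ t := fun h => hne (Subtype.ext h)
  have hs' := mem_Icc.mp s.2
  have ht' := mem_Icc.mp t.2
  rcases hdvd with ⟨k, hk⟩ | ⟨k, hk⟩
  · rcases k with _ | _ | k
    · omega
    · omega
    · nlinarith
  · obtain ⟨ht, hk⟩ := Nat.odd_mul.mp (hk ▸ hs)
    have hk3 : 3 ≤ k := by
      rw [Nat.odd_iff] at hk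
      have : k ≠ 1 := by rintro rfl; omega
      omega
    exact ⟨ht, by nlinarith⟩

/-- Shifting by the even number `2 * (n / 4 + 1)` injects the small odd numbers into the large
ones, missing the largest odd number `≤ n`. -/
lemma card_odd_three_mul_le_lt (hn : 20 ≤ n) :
    #{m ∈ Icc 1 n | Odd m ∧ 3 * m ≤ n} < #{m ∈ Icc 1 n | Odd m ∧ n < 2 * m} := by
  set c := 2 * (n / 4 + 1)
  set top := 2 * ((n - 1) / 2) + 1
  have htop : top ∈ {m ∈ Icc 1 n | Odd m ∧ n < 2 * m} := by
    simp only [mem_filter, mem_Icc, Nat.odd_iff]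
    omega
  rw [← card_erase_add_one htop, Nat.lt_succ_iff]
  refine card_le_card_of_injOn (· + c) (fun m hm => ?_) (add_left_injective c).injOn
  simp only [coe_filter, coe_erase, mem_Icc, Nat.odd_iff, Set.mem_ofPred_eq, Set.mem_sdiff,
    Set.mem_singleton_iff] at hm ⊢
  omega

lemma IsMatching.exists_not_covers_of_divGraph (hn : 20 ≤ n)
    {M : Finset (Sym2 {k : ℕ // k ∈ Icc 1 n})} (hM : IsMatching (divGraph n) M) :
    ∃ s : {k : ℕ // k ∈ Icc 1 n}, n < 2 * s ∧ ¬Covers M s := by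
  by_contra! h
  have := hM.card_le_card_of_forall_covers
    (S := {m ∈ Icc 1 n | Odd m ∧ n < 2 * m}.subtype (· ∈ Icc 1 n))
    (T := {m ∈ Icc 1 n | Odd m ∧ 3 * m ≤ n}.subtype (· ∈ Icc 1 n))
    (fun s hs => by simp only [mem_subtype, mem_filter] at hs; exact h s hs.2.2)
    (fun s hs t hst => by
      simp only [mem_subtype, mem_filter] at hs ⊢
      exact ⟨t.2, divGraph_adj_of_odd hs.2.1 hs.2.2 hst⟩)
  simp only [card_subtype, filter_true_of_mem fun _ hm => (mem_filter.mp hm).1] at this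
  exact (card_odd_three_mul_le_lt hn).not_ge this

end DivGraph

/-- For all sufficiently large `n`, the vertex `1` belongs to `A(Gₙ)` in the Gallai–Edmonds
decomposition of the divisibility graph `Gₙ`: every maximum matching covers `1`, and `1`
has a neighbor that some maximum matching fails to cover. -/
theorem one_mem_A_of_large :
    ∃ N : ℕ, ∀ n : ℕ, N ≤ n → ∀ h1 : (1 : ℕ) ∈ Finset.Icc 1 n,
      (∀ M : Finset (Sym2 {k : ℕ // k ∈ Finset.Icc 1 n}),
          IsMaximumMatching (divGraph n) M → Covers M ⟨1, h1⟩) ∧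
      ∃ m : {k : ℕ // k ∈ Finset.Icc 1 n}, (divGraph n).Adj ⟨1, h1⟩ m ∧
        ∃ M : Finset (Sym2 {k : ℕ // k ∈ Finset.Icc 1 n}),
          IsMaximumMatching (divGraph n) M ∧ ¬ Covers M m := by
  refine ⟨20, fun n hn h1 => ?_⟩
  have exists_adj_not_covers (M : Finset (Sym2 {k : ℕ // k ∈ Icc 1 n}))
      (hM : IsMatching (divGraph n) M) : ∃ s, (divGraph n).Adj ⟨1, h1⟩ s ∧ ¬Covers M s := by
    obtain ⟨s, hsn, hsM⟩ := hM.exists_not_covers_of_divGraph hn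
    exact ⟨s, divGraph_adj_one.mpr (by omega), hsM⟩
  refine ⟨fun M hM => ?_, ?_⟩
  · obtain ⟨s, h1s, hsM⟩ := exists_adj_not_covers M hM.1
    exact (hM.covers_or_covers h1s).resolve_right hsM
  · obtain ⟨M, hM⟩ := exists_isMaximumMatching (divGraph n)
    obtain ⟨s, h1s, hsM⟩ := exists_adj_not_covers M hM.1
    exact ⟨s, h1s, M, hM, hsM⟩
end
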